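/- arXiv:2510.15640 — 2 statements merged into one kernel-verified Lean document; each statement's English description precedes it below -/
import Mathlib

section
/- Let (A, ·, {,,}) be a Nambu-Poisson algebra over a field k of characteristic 0 and (V;μ,ρ) a representation of it. Then a pair (φ,ψ) of a symmetric bilinear map φ: A×A→V and a skew-symmetric trilinear map ψ: A×A×A→V is a Nambu-Poisson 2-cocycle of A with coefficients in V if and only if A⊕V with operations (a,u)·_{⋉φ}(b,v) := (a·b, μ(a)v + μ(b)u + φ(a,b)) and {(a,u),(b,v),(c,w)}_{⋉ψ} := ({a,b,c}, ρ(a,b)w + ρ(b,c)u + ρ(c,a)v + ψ(a,b,c)) is a Nambu-Poisson algebra. -/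
/-! Each identity of the extension `A × V` is multilinear, so its `V`-component splits into the
part with all arguments in `A × 0` and the parts linear in a single `V`-argument. The former is
the corresponding cocycle identity of `(φ, ψ)`; the latter, like the `A`-component, are identities
of the representation `(V; μ, ρ)` and of `A`, hence hold automatically. -/

namespace NPPaper

variable {A V : Type*} [AddCommGroup A] [AddCommGroup V]

/-- A commutative associative multiplication (axioms on a plain binary operation). -/
def IsCommAssocFun (m : A → A → A) : Prop :=
  (∀ a b, m a b = m b a) ∧ (∀ a b c, m (m a b) c = m a (m b c))

/-- A 3-Lie bracket: skew-symmetric and satisfying the fundamental identity. -/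
def IsThreeLieFun (br : A → A → A → A) : Prop :=
  (∀ a b c, br a b c = - br b a c) ∧ (∀ a b c, br a b c = - br a c b) ∧
  (∀ a b c d e, br a b (br c d e) =
      br (br a b c) d e + br c (br a b d) e + br c d (br a b e))

/-- A Nambu-Poisson structure: commutative associative product, 3-Lie bracket,
and the Leibniz rule. -/
def IsNambuPoissonFun (m : A → A → A) (br : A → A → A → A) : Prop :=
  IsCommAssocFun m ∧ IsThreeLieFun br ∧
  (∀ a b c d, br a b (m c d) = m (br a b c) d + m c (br a b d))

/-- A representation of a 3-Lie algebra (pointwise form, skew-symmetry included). -/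
def IsThreeLieRepFun (br : A → A → A → A) (ρ : A → A → V → V) : Prop :=
  (∀ a b v, ρ a b v = - ρ b a v) ∧
  (∀ a b c d v, ρ a b (ρ c d v) - ρ c d (ρ a b v) =
      ρ (br a b c) d v + ρ c (br a b d) v) ∧
  (∀ a b c d v, ρ (br a b c) d v =
      ρ a b (ρ c d v) + ρ b c (ρ a d v) + ρ c a (ρ b d v))

/-- A representation of a Nambu-Poisson algebra (pointwise form). -/
def IsNPRepFun (m : A → A → A) (br : A → A → A → A)
    (μ : A → V → V) (ρ : A → A → V → V) : Prop :=
  (∀ a b v, μ (m a b) v = μ a (μ b v)) ∧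
  IsThreeLieRepFun br ρ ∧
  (∀ a b c v, μ (br a b c) v = ρ a b (μ c v) - μ c (ρ a b v)) ∧
  (∀ a b c v, ρ a (m b c) v = μ b (ρ a c v) + μ c (ρ a b v))

/-- A Harrison 2-cocycle of a commutative associative algebra with coefficients
in a representation. -/
def IsHarrison2CocycleFun (m : A → A → A) (μ : A → V → V) (φ : A → A → V) : Prop :=
  (∀ a b, φ a b = φ b a) ∧
  (∀ a b c, μ a (φ b c) - φ (m a b) c + φ a (m b c) - μ c (φ a b) = 0)

/-- A 2-cocycle of a 3-Lie algebra with coefficients in a representation. -/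
def IsThreeLie2CocycleFun (br : A → A → A → A) (ρ : A → A → V → V)
    (ψ : A → A → A → V) : Prop :=
  (∀ a b c, ψ a b c = - ψ b a c) ∧ (∀ a b c, ψ a b c = - ψ a c b) ∧
  (∀ a b c d e, ψ a b (br c d e) + ρ a b (ψ c d e) =
      ψ (br a b c) d e + ψ c (br a b d) e + ψ c d (br a b e)
      + ρ d e (ψ a b c) + ρ e c (ψ a b d) + ρ c d (ψ a b e))

/-- A Nambu-Poisson 2-cocycle. -/
def IsNP2CocycleFun (m : A → A → A) (br : A → A → A → A)
    (μ : A → V → V) (ρ : A → A → V → V)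
    (φ : A → A → V) (ψ : A → A → A → V) : Prop :=
  IsHarrison2CocycleFun m μ φ ∧ IsThreeLie2CocycleFun br ρ ψ ∧
  (∀ a b c d, ψ a b (m c d) + ρ a b (φ c d) =
      φ c (br a b d) + μ c (ψ a b d) + φ (br a b c) d + μ d (ψ a b c))

/-- A Poisson algebra structure. -/
def IsPoissonFun (m : A → A → A) (pb : A → A → A) : Prop :=
  IsCommAssocFun m ∧
  (∀ a b, pb a b = - pb b a) ∧
  (∀ a b c, pb a (pb b c) = pb (pb a b) c + pb b (pb a c)) ∧
  (∀ a b c, pb a (m b c) = m (pb a b) c + m b (pb a c))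

/-- A representation of a Poisson algebra (pointwise form). -/
def IsPoissonRepFun (m : A → A → A) (pb : A → A → A) (μ ρb : A → V → V) : Prop :=
  (∀ a b v, μ (m a b) v = μ a (μ b v)) ∧
  (∀ a b v, ρb (pb a b) v = ρb a (ρb b v) - ρb b (ρb a v)) ∧
  (∀ a b v, μ (pb a b) v = ρb a (μ b v) - μ b (ρb a v)) ∧
  (∀ a b v, ρb (m a b) v = μ a (ρb b v) + μ b (ρb a v))

/-- A Poisson 2-cocycle. -/
def IsPoisson2CocycleFun (m pb : A → A → A) (μ ρb : A → V → V)
    (φ ψb : A → A → V) : Prop :=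
  IsHarrison2CocycleFun m μ φ ∧
  (∀ a b, ψb a b = - ψb b a) ∧
  (∀ a b c, ρb a (ψb b c) + ρb b (ψb c a) + ρb c (ψb a b)
      + ψb a (pb b c) + ψb b (pb c a) + ψb c (pb a b) = 0) ∧
  (∀ a b c, ψb a (m b c) + ρb a (φ b c) =
      φ b (pb a c) + μ b (ψb a c) + φ (pb a b) c + μ c (ψb a b))

/-- A Nijenhuis operator on a Nambu-Poisson algebra. -/
def IsNijenhuisFun (m : A → A → A) (br : A → A → A → A) (N : A → A) : Prop :=
  (∀ a b, m (N a) (N b) = N (m (N a) b + m a (N b) - N (m a b))) ∧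
  (∀ a b c, br (N a) (N b) (N c) =
      N (br (N a) (N b) c + br (N a) b (N c) + br a (N b) (N c)
        - N (br (N a) b c + br a (N b) c + br a b (N c) - N (br a b c))))

/-- The total multiplication `a ⊙ b = a ⋄ b + b ⋄ a + a * b` of an NS-commutative algebra. -/
def odotFun (d s : A → A → A) (a b : A) : A := d a b + d b a + s a b

/-- The total bracket `{{a,b,c}} = [a,b,c] + [b,c,a] + [c,a,b] + ⟦a,b,c⟧` of an NS-3-Lie algebra. -/
def ttotFun (t l : A → A → A → A) (a b c : A) : A :=
  t a b c + t b c a + t c a b + l a b c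

/-- An NS-commutative algebra. -/
def IsNSCommFun (d s : A → A → A) : Prop :=
  (∀ a b, s a b = s b a) ∧
  (∀ a b c, d a (d b c) = d (odotFun d s a b) c) ∧
  (∀ a b c, d a (s b c) + s a (odotFun d s b c) = d b (s a c) + s b (odotFun d s a c))

/-- An NS-3-Lie algebra. -/
def IsNSThreeLieFun (t l : A → A → A → A) : Prop :=
  (∀ a b c, t a b c = - t b a c) ∧
  (∀ a b c, l a b c = - l b a c) ∧ (∀ a b c, l a b c = - l a c b) ∧
  (∀ a b c d e, t a b (t c d e) =
      t (ttotFun t l a b c) d e + t c (ttotFun t l a b d) e + t c d (t a b e)) ∧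
  (∀ a b c d e, t (ttotFun t l a b c) d e =
      t a b (t c d e) + t b c (t a d e) + t c a (t b d e)) ∧
  (∀ a b c d e, l a b (ttotFun t l c d e) + t a b (l c d e) =
      l (ttotFun t l a b c) d e + l c (ttotFun t l a b d) e + l c d (ttotFun t l a b e)
      + t d e (l a b c) + t e c (l a b d) + t c d (l a b e))

/-- An NS-Nambu-Poisson algebra. -/
def IsNSNambuPoissonFun (d s : A → A → A) (t l : A → A → A → A) : Prop :=
  IsNSCommFun d s ∧ IsNSThreeLieFun t l ∧
  (∀ a b c x, d (ttotFun t l a b c) x = t a b (d c x) - d c (t a b x)) ∧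
  (∀ a b c x, t (odotFun d s a b) c x = d a (t b c x) + d b (t a c x)) ∧
  (∀ a b c x, l a b (odotFun d s c x) + t a b (s c x) =
      s c (ttotFun t l a b x) + d c (l a b x) + s (ttotFun t l a b c) x + d x (l a b c))

/-- A `(φ,ψ)`-twisted O-operator. -/
def IsTwistedOFun (m : A → A → A) (br : A → A → A → A)
    (μ : A → V → V) (ρ : A → A → V → V)
    (φ : A → A → V) (ψ : A → A → A → V) (r : V → A) : Prop :=
  (∀ u v, m (r u) (r v) = r (μ (r u) v + μ (r v) u + φ (r u) (r v))) ∧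
  (∀ u v w, br (r u) (r v) (r w) =
      r (ρ (r u) (r v) w + ρ (r v) (r w) u + ρ (r w) (r u) v + ψ (r u) (r v) (r w)))

section SemidirectProduct

variable {R : Type*} [CommSemiring R] [Module R A] [Module R V]

def semidirectMul (m : A →ₗ[R] A →ₗ[R] A) (μ : A →ₗ[R] V →ₗ[R] V) (φ : A →ₗ[R] A →ₗ[R] V)
    (p q : A × V) : A × V :=
  (m p.1 q.1, μ p.1 q.2 + μ q.1 p.2 + φ p.1 q.1)

def semidirectBracket (br : A →ₗ[R] A →ₗ[R] A →ₗ[R] A) (ρ : A →ₗ[R] A →ₗ[R] V →ₗ[R] V)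
    (ψ : A →ₗ[R] A →ₗ[R] A →ₗ[R] V) (p q r : A × V) : A × V :=
  (br p.1 q.1 r.1, ρ p.1 q.1 r.2 + ρ q.1 r.1 p.2 + ρ r.1 p.1 q.2 + ψ p.1 q.1 r.1)

variable {m : A →ₗ[R] A →ₗ[R] A} {br : A →ₗ[R] A →ₗ[R] A →ₗ[R] A}
  {μ : A →ₗ[R] V →ₗ[R] V} {ρ : A →ₗ[R] A →ₗ[R] V →ₗ[R] V}
  {φ : A →ₗ[R] A →ₗ[R] V} {ψ : A →ₗ[R] A →ₗ[R] A →ₗ[R] V}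

theorem rep_bracket_right (hskew : ∀ a b v, ρ a b v = -ρ b a v)
    (hbr : ∀ a b c d v, ρ (br a b c) d v = ρ a b (ρ c d v) + ρ b c (ρ a d v) + ρ c a (ρ b d v))
    (a b c d : A) (v : V) :
    ρ a (br b c d) v = ρ b c (ρ a d v) + ρ c d (ρ a b v) + ρ d b (ρ a c v) := by
  rw [hskew, hbr, hskew d a, hskew b a, hskew c a]
  simp only [map_neg]
  abel

theorem rep_mul_left (hskew : ∀ a b v, ρ a b v = -ρ b a v)
    (hρm : ∀ a b c v, ρ a (m b c) v = μ b (ρ a c v) + μ c (ρ a b v)) (a b c : A) (v : V) :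
    ρ (m a b) c v = μ a (ρ b c v) + μ b (ρ a c v) := by
  rw [hskew, hρm, hskew c b, hskew c a]
  simp only [map_neg]
  abel

theorem semidirectMul_comm_iff (hm : ∀ a b, m a b = m b a) :
    (∀ p q, semidirectMul m μ φ p q = semidirectMul m μ φ q p) ↔ ∀ a b, φ a b = φ b a := by
  refine ⟨fun h a b => ?_, fun h p q => Prod.ext (hm _ _) ?_⟩
  · simpa [semidirectMul] using congrArg Prod.snd (h (a, 0) (b, 0))
  · simp only [semidirectMul, h p.1 q.1]
    abel

theorem semidirectMul_assoc_iff (hm : ∀ a b, m a b = m b a)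
    (hassoc : ∀ a b c, m (m a b) c = m a (m b c)) (hμ : ∀ a b v, μ (m a b) v = μ a (μ b v)) :
    (∀ p q r, semidirectMul m μ φ (semidirectMul m μ φ p q) r =
        semidirectMul m μ φ p (semidirectMul m μ φ q r)) ↔
      ∀ a b c, μ a (φ b c) - φ (m a b) c + φ a (m b c) - μ c (φ a b) = 0 := by
  refine ⟨fun h a b c => ?_, fun h ⟨a, u⟩ ⟨b, v⟩ ⟨c, w⟩ => Prod.ext (hassoc a b c) ?_⟩
  · have := congrArg Prod.snd (h (a, 0) (b, 0) (c, 0))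
    simp only [semidirectMul, map_zero, add_zero, zero_add] at this
    linear_combination (norm := abel) -this
  · have hμcomm : ∀ x y v, μ x (μ y v) = μ y (μ x v) := fun x y v => by
      rw [← hμ, ← hμ, hm]
    simp only [semidirectMul, map_add]
    linear_combination (norm := abel) hμ a b w + hμcomm c a v + hμcomm c b u - hμ b c u - h a b c

theorem semidirectBracket_swap₁₂_iff (hbr : ∀ a b c, br a b c = -br b a c)
    (hskew : ∀ a b v, ρ a b v = -ρ b a v) :
    (∀ p q r, semidirectBracket br ρ ψ p q r = -semidirectBracket br ρ ψ q p r) ↔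
      ∀ a b c, ψ a b c = -ψ b a c := by
  refine ⟨fun h a b c => ?_, fun h ⟨a, u⟩ ⟨b, v⟩ ⟨c, w⟩ => Prod.ext (hbr a b c) ?_⟩
  · simpa [semidirectBracket] using congrArg Prod.snd (h (a, 0) (b, 0) (c, 0))
  · simp only [semidirectBracket, Prod.snd_neg]
    linear_combination (norm := abel) hskew a b w + hskew b c u + hskew c a v + h a b c

theorem semidirectBracket_swap₂₃_iff (hbr : ∀ a b c, br a b c = -br a c b)
    (hskew : ∀ a b v, ρ a b v = -ρ b a v) :
    (∀ p q r, semidirectBracket br ρ ψ p q r = -semidirectBracket br ρ ψ p r q) ↔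
      ∀ a b c, ψ a b c = -ψ a c b := by
  refine ⟨fun h a b c => ?_, fun h ⟨a, u⟩ ⟨b, v⟩ ⟨c, w⟩ => Prod.ext (hbr a b c) ?_⟩
  · simpa [semidirectBracket] using congrArg Prod.snd (h (a, 0) (b, 0) (c, 0))
  · simp only [semidirectBracket, Prod.snd_neg]
    linear_combination (norm := abel) hskew a b w + hskew b c u + hskew c a v + h a b c

theorem semidirectBracket_fundamental_iff
    (hbr : ∀ a b c d e, br a b (br c d e) = br (br a b c) d e + br c (br a b d) e + br c d (br a b e))
    (hskew : ∀ a b v, ρ a b v = -ρ b a v)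
    (hρ₁ : ∀ a b c d v, ρ a b (ρ c d v) - ρ c d (ρ a b v) = ρ (br a b c) d v + ρ c (br a b d) v)
    (hρ₂ : ∀ a b c d v, ρ (br a b c) d v = ρ a b (ρ c d v) + ρ b c (ρ a d v) + ρ c a (ρ b d v)) :
    (∀ p q r s t, semidirectBracket br ρ ψ p q (semidirectBracket br ρ ψ r s t) =
        semidirectBracket br ρ ψ (semidirectBracket br ρ ψ p q r) s t +
          semidirectBracket br ρ ψ r (semidirectBracket br ρ ψ p q s) t +
          semidirectBracket br ρ ψ r s (semidirectBracket br ρ ψ p q t)) ↔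
      ∀ a b c d e, ψ a b (br c d e) + ρ a b (ψ c d e) =
        ψ (br a b c) d e + ψ c (br a b d) e + ψ c d (br a b e)
          + ρ d e (ψ a b c) + ρ e c (ψ a b d) + ρ c d (ψ a b e) := by
  refine ⟨fun h a b c d e => ?_,
    fun h ⟨a, u⟩ ⟨b, v⟩ ⟨c, w⟩ ⟨d, x⟩ ⟨e, y⟩ => Prod.ext (hbr a b c d e) ?_⟩
  · have := congrArg Prod.snd (h (a, 0) (b, 0) (c, 0) (d, 0) (e, 0))
    simp only [semidirectBracket, Prod.snd_add, map_zero, add_zero, zero_add] at this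
    linear_combination (norm := abel) this
  · simp only [semidirectBracket, Prod.snd_add, map_add]
    linear_combination (norm := abel) hρ₁ a b c d y + hρ₁ a b d e w + hρ₁ a b e c x +
      rep_bracket_right hskew hρ₂ b c d e u + hρ₂ c d e a v + h a b c d e

theorem semidirect_leibniz_iff
    (hleib : ∀ a b c d, br a b (m c d) = m (br a b c) d + m c (br a b d))
    (hskew : ∀ a b v, ρ a b v = -ρ b a v)
    (hμbr : ∀ a b c v, μ (br a b c) v = ρ a b (μ c v) - μ c (ρ a b v))
    (hρm : ∀ a b c v, ρ a (m b c) v = μ b (ρ a c v) + μ c (ρ a b v)) :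
    (∀ p q r s, semidirectBracket br ρ ψ p q (semidirectMul m μ φ r s) =
        semidirectMul m μ φ (semidirectBracket br ρ ψ p q r) s +
          semidirectMul m μ φ r (semidirectBracket br ρ ψ p q s)) ↔
      ∀ a b c d, ψ a b (m c d) + ρ a b (φ c d) =
        φ c (br a b d) + μ c (ψ a b d) + φ (br a b c) d + μ d (ψ a b c) := by
  refine ⟨fun h a b c d => ?_,
    fun h ⟨a, u⟩ ⟨b, v⟩ ⟨c, w⟩ ⟨d, x⟩ => Prod.ext (hleib a b c d) ?_⟩
  · have := congrArg Prod.snd (h (a, 0) (b, 0) (c, 0) (d, 0))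
    simp only [semidirectBracket, semidirectMul, Prod.snd_add, map_zero, add_zero,
      zero_add] at this
    linear_combination (norm := abel) this
  · simp only [semidirectBracket, semidirectMul, Prod.snd_add, map_add]
    linear_combination (norm := abel) -hμbr a b c x - hμbr a b d w + hρm b c d u +
      rep_mul_left hskew hρm c d a v + h a b c d

theorem isCommAssocFun_semidirectMul_iff (hm : IsCommAssocFun (fun a b => m a b))
    (hμ : ∀ a b v, μ (m a b) v = μ a (μ b v)) :
    IsCommAssocFun (semidirectMul m μ φ) ↔
      IsHarrison2CocycleFun (fun a b => m a b) (fun a v => μ a v) (fun a b => φ a b) :=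
  and_congr (semidirectMul_comm_iff hm.1) (semidirectMul_assoc_iff hm.1 hm.2 hμ)

theorem isThreeLieFun_semidirectBracket_iff (hbr : IsThreeLieFun (fun a b c => br a b c))
    (hρ : IsThreeLieRepFun (fun a b c => br a b c) (fun a b v => ρ a b v)) :
    IsThreeLieFun (semidirectBracket br ρ ψ) ↔
      IsThreeLie2CocycleFun (fun a b c => br a b c) (fun a b v => ρ a b v)
        (fun a b c => ψ a b c) :=
  and_congr (semidirectBracket_swap₁₂_iff hbr.1 hρ.1) <|
    and_congr (semidirectBracket_swap₂₃_iff hbr.2.1 hρ.1)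
      (semidirectBracket_fundamental_iff hbr.2.2 hρ.1 hρ.2.1 hρ.2.2)

end SemidirectProduct

theorem statement5_general {k : Type*} [Field k]
    {A : Type*} [AddCommGroup A] [Module k A]
    {V : Type*} [AddCommGroup V] [Module k V]
    (m : A →ₗ[k] A →ₗ[k] A) (br : A →ₗ[k] A →ₗ[k] A →ₗ[k] A)
    (μ : A →ₗ[k] V →ₗ[k] V) (ρ : A →ₗ[k] A →ₗ[k] V →ₗ[k] V)
    (φ : A →ₗ[k] A →ₗ[k] V) (ψ : A →ₗ[k] A →ₗ[k] A →ₗ[k] V)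
    (hA : IsNambuPoissonFun (fun a b => m a b) (fun a b c => br a b c))
    (hrep : IsNPRepFun (fun a b => m a b) (fun a b c => br a b c)
        (fun a v => μ a v) (fun a b v => ρ a b v)) :
    IsNP2CocycleFun (fun a b => m a b) (fun a b c => br a b c)
        (fun a v => μ a v) (fun a b v => ρ a b v)
        (fun a b => φ a b) (fun a b c => ψ a b c) ↔
      IsNambuPoissonFun
        (fun p q : A × V => (m p.1 q.1, μ p.1 q.2 + μ q.1 p.2 + φ p.1 q.1))
        (fun p q r : A × V =>
          (br p.1 q.1 r.1,
            ρ p.1 q.1 r.2 + ρ q.1 r.1 p.2 + ρ r.1 p.1 q.2 + ψ p.1 q.1 r.1)) := by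
  obtain ⟨hm, hbr, hleib⟩ := hA
  obtain ⟨hμ, hρ, hμbr, hρm⟩ := hrep
  exact Iff.symm <| and_congr (isCommAssocFun_semidirectMul_iff hm hμ) <|
    and_congr (isThreeLieFun_semidirectBracket_iff hbr hρ)
      (semidirect_leibniz_iff hleib hρ.1 hμbr hρm)

theorem statement5 {k : Type*} [Field k] [CharZero k]
    {A : Type*} [AddCommGroup A] [Module k A]
    {V : Type*} [AddCommGroup V] [Module k V]
    (m : A →ₗ[k] A →ₗ[k] A) (br : A →ₗ[k] A →ₗ[k] A →ₗ[k] A)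
    (μ : A →ₗ[k] V →ₗ[k] V) (ρ : A →ₗ[k] A →ₗ[k] V →ₗ[k] V)
    (φ : A →ₗ[k] A →ₗ[k] V) (ψ : A →ₗ[k] A →ₗ[k] A →ₗ[k] V)
    (hA : IsNambuPoissonFun (fun a b => m a b) (fun a b c => br a b c))
    (hrep : IsNPRepFun (fun a b => m a b) (fun a b c => br a b c)
        (fun a v => μ a v) (fun a b v => ρ a b v))
    (hφsym : ∀ a b, φ a b = φ b a)
    (hψ₁ : ∀ a b c, ψ a b c = - ψ b a c)
    (hψ₂ : ∀ a b c, ψ a b c = - ψ a c b) :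
    IsNP2CocycleFun (fun a b => m a b) (fun a b c => br a b c)
        (fun a v => μ a v) (fun a b v => ρ a b v)
        (fun a b => φ a b) (fun a b c => ψ a b c) ↔
      IsNambuPoissonFun
        (fun p q : A × V => (m p.1 q.1, μ p.1 q.2 + μ q.1 p.2 + φ p.1 q.1))
        (fun p q r : A × V =>
          (br p.1 q.1 r.1,
            ρ p.1 q.1 r.2 + ρ q.1 r.1 p.2 + ρ r.1 p.1 q.2 + ψ p.1 q.1 r.1)) :=
  statement5_general m br μ ρ φ ψ hA hrep

end NPPaper
end

section
/- Let (A, ⋄, *, [,,], ⟦,,⟧) be an NS-Nambu-Poisson algebra over a field k of characteristic 0. Then (A, ⊙, {{,,}}) is a Nambu-Poisson algebra, where a⊙b := a⋄b + b⋄a + a*b and {{a,b,c}} := [a,b,c] + [b,c,a] + [c,a,b] + ⟦a,b,c⟧ (the subadjacent Nambu-Poisson algebra). -/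
namespace NPPaper

variable {A V : Type*} [AddCommGroup A] [AddCommGroup V]

/-! The subadjacent operations are sums of the NS-operations, and every Nambu-Poisson axiom for
them is a linear combination of NS-axioms. In the fundamental identity for `{{a, b, {{c, d, e}}}}`,
`[a, b, -]` is expanded on `{{c, d, e}}` by the first NS-3-Lie identity, the terms
`[b, {{c, d, e}}, a]` and `[{{c, d, e}}, a, b]` by the second, and `⟦a, b, {{c, d, e}}⟧` together
with `[a, b, ⟦c, d, e⟧]` by the third; the Leibniz rule is obtained in the same way from the three
compatibility conditions. -/

section Skew

variable {t l : A → A → A → A}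

theorem ttotFun_antisymm_left (ht : ∀ a b c, t a b c = - t b a c)
    (hl : ∀ a b c, l a b c = - l b a c) (a b c : A) :
    ttotFun t l a b c = - ttotFun t l b a c := by
  simp only [ttotFun]
  linear_combination (norm := abel) ht a b c + hl a b c + ht a c b + ht b c a

theorem ttotFun_antisymm_right (ht : ∀ a b c, t a b c = - t b a c)
    (hl : ∀ a b c, l a b c = - l a c b) (a b c : A) :
    ttotFun t l a b c = - ttotFun t l a c b := by
  simp only [ttotFun]
  linear_combination (norm := abel) ht a b c + hl a b c + ht a c b + ht b c a

end Skew

theorem IsNSCommFun.odotFun_comm {d s : A → A → A} (h : IsNSCommFun d s) (a b : A) :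
    odotFun d s a b = odotFun d s b a := by
  simp only [odotFun, h.1 a b]
  abel

section Linear

variable {R : Type*} [CommSemiring R] [Module R A]

theorem IsNSCommFun.odotFun_assoc {d s : A →ₗ[R] A →ₗ[R] A}
    (h : IsNSCommFun (d · ·) (s · ·)) (a b c : A) :
    odotFun (d · ·) (s · ·) (odotFun (d · ·) (s · ·) a b) c =
      odotFun (d · ·) (s · ·) a (odotFun (d · ·) (s · ·) b c) := by
  obtain ⟨hs, hd, hds⟩ := h
  linear_combination (norm := skip) -hd a b c - hds a b c - hd a c b - hds b c a
    + hd c a b + hd c b a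
  simp only [odotFun, map_add, LinearMap.add_apply, hs]
  abel

theorem IsNSCommFun.isCommAssocFun_odotFun {d s : A →ₗ[R] A →ₗ[R] A}
    (h : IsNSCommFun (d · ·) (s · ·)) : IsCommAssocFun (odotFun (d · ·) (s · ·)) :=
  ⟨h.odotFun_comm, h.odotFun_assoc⟩

theorem IsNSThreeLieFun.ttotFun_fundamental {t l : A →ₗ[R] A →ₗ[R] A →ₗ[R] A}
    (h : IsNSThreeLieFun (t · · ·) (l · · ·)) (a b c d e : A) :
    ttotFun (t · · ·) (l · · ·) a b (ttotFun (t · · ·) (l · · ·) c d e) =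
      ttotFun (t · · ·) (l · · ·) (ttotFun (t · · ·) (l · · ·) a b c) d e +
      ttotFun (t · · ·) (l · · ·) c (ttotFun (t · · ·) (l · · ·) a b d) e +
      ttotFun (t · · ·) (l · · ·) c d (ttotFun (t · · ·) (l · · ·) a b e) := by
  obtain ⟨ht, -, -, hab, hcyc, hl⟩ := h
  linear_combination (norm := skip) hab a b c d e + hab a b d e c + hab a b e c d
    + hl a b c d e + hcyc c d e a b - hcyc c d e b a
    + ht b (ttotFun (t · · ·) (l · · ·) c d e) a - congrArg (t c d) (ht b e a)
    - congrArg (t d e) (ht b c a) - congrArg (t e c) (ht b d a)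
  simp only [ttotFun, map_add, map_neg, LinearMap.add_apply]
  abel

theorem IsNSThreeLieFun.isThreeLieFun_ttotFun {t l : A →ₗ[R] A →ₗ[R] A →ₗ[R] A}
    (h : IsNSThreeLieFun (t · · ·) (l · · ·)) : IsThreeLieFun (ttotFun (t · · ·) (l · · ·)) :=
  ⟨ttotFun_antisymm_left h.1 h.2.1, ttotFun_antisymm_right h.1 h.2.2.1, h.ttotFun_fundamental⟩

theorem IsNSNambuPoissonFun.ttotFun_leibniz {d s : A →ₗ[R] A →ₗ[R] A}
    {t l : A →ₗ[R] A →ₗ[R] A →ₗ[R] A}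
    (h : IsNSNambuPoissonFun (d · ·) (s · ·) (t · · ·) (l · · ·)) (a b c x : A) :
    ttotFun (t · · ·) (l · · ·) a b (odotFun (d · ·) (s · ·) c x) =
      odotFun (d · ·) (s · ·) (ttotFun (t · · ·) (l · · ·) a b c) x +
      odotFun (d · ·) (s · ·) c (ttotFun (t · · ·) (l · · ·) a b x) := by
  obtain ⟨-, ⟨ht, -⟩, hd, hodot, hs⟩ := h
  linear_combination (norm := skip) -hd a b c x - hd a b x c + hodot c x a b - hodot c x b a
    + hs a b c x + ht b (odotFun (d · ·) (s · ·) c x) a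
    - congrArg (d c) (ht b x a) - congrArg (d x) (ht b c a)
  simp only [ttotFun, odotFun, map_add, map_neg, LinearMap.add_apply]
  abel

theorem IsNSNambuPoissonFun.isNambuPoissonFun {d s : A →ₗ[R] A →ₗ[R] A}
    {t l : A →ₗ[R] A →ₗ[R] A →ₗ[R] A}
    (h : IsNSNambuPoissonFun (d · ·) (s · ·) (t · · ·) (l · · ·)) :
    IsNambuPoissonFun (odotFun (d · ·) (s · ·)) (ttotFun (t · · ·) (l · · ·)) :=
  ⟨h.1.isCommAssocFun_odotFun, h.2.1.isThreeLieFun_ttotFun, h.ttotFun_leibniz⟩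

end Linear

theorem statement13_general {k : Type*} [Field k]
    {A : Type*} [AddCommGroup A] [Module k A]
    (d s : A →ₗ[k] A →ₗ[k] A) (t l : A →ₗ[k] A →ₗ[k] A →ₗ[k] A)
    (h : IsNSNambuPoissonFun (fun a b => d a b) (fun a b => s a b)
        (fun a b c => t a b c) (fun a b c => l a b c)) :
    IsNambuPoissonFun
      (odotFun (fun a b => d a b) (fun a b => s a b))
      (ttotFun (fun a b c => t a b c) (fun a b c => l a b c)) :=
  h.isNambuPoissonFun

theorem statement13 {k : Type*} [Field k] [CharZero k]
    {A : Type*} [AddCommGroup A] [Module k A]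
    (d s : A →ₗ[k] A →ₗ[k] A) (t l : A →ₗ[k] A →ₗ[k] A →ₗ[k] A)
    (h : IsNSNambuPoissonFun (fun a b => d a b) (fun a b => s a b)
        (fun a b c => t a b c) (fun a b c => l a b c)) :
    IsNambuPoissonFun
      (odotFun (fun a b => d a b) (fun a b => s a b))
      (ttotFun (fun a b c => t a b c) (fun a b c => l a b c)) :=
  statement13_general d s t l h

end NPPaper
end
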